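/- A positive integer n lies in the image of the function g(m) = gcd(m, F_m) if and only if n = gcd(ℓ(n), F_{ℓ(n)}), where ℓ(n) = lcm(n, z(n)). -/
import Mathlib


/-- Rank of appearance of `n` in the Fibonacci sequence. -/
noncomputable def zf (n : ℕ) : ℕ := sInf {k | 0 < k ∧ n ∣ Nat.fib k}

noncomputable def ellf (n : ℕ) : ℕ := Nat.lcm n (zf n)

def gf (n : ℕ) : ℕ := Nat.gcd n (Nat.fib n)

def Afib : Set ℕ := {m | ∃ n : ℕ, 0 < n ∧ gf n = m}

lemma pair_shift (n : ℕ) : ∀ a b : ℕ, a ≤ b →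
    (Nat.fib a : ZMod n) = Nat.fib b → (Nat.fib (a+1) : ZMod n) = Nat.fib (b+1) →
    (Nat.fib (b - a) : ZMod n) = 0 := by
  intro a
  induction a with
  | zero => intro b _ h1 _; simpa using h1.symm
  | succ a ih =>
    intro b hab h1 h2
    obtain ⟨c, rfl⟩ : ∃ c, b = c + 1 := ⟨b - 1, by omega⟩
    have hac : a ≤ c := by omega
    have h3 : (Nat.fib a : ZMod n) = Nat.fib c := by
      have e1 : (Nat.fib a : ZMod n) = (Nat.fib (a+2) : ZMod n) - Nat.fib (a+1) := by
        rw [Nat.fib_add_two]; push_cast; ring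
      have e2 : (Nat.fib c : ZMod n) = (Nat.fib (c+2) : ZMod n) - Nat.fib (c+1) := by
        rw [Nat.fib_add_two]; push_cast; ring
      rw [e1, e2, h2, h1]
    have := ih c hac h3 h1
    simpa [Nat.succ_sub_succ] using this

lemma exists_fib_dvd (n : ℕ) (hn : 0 < n) : ∃ k, 0 < k ∧ n ∣ Nat.fib k := by
  haveI : NeZero n := ⟨hn.ne'⟩
  obtain ⟨x, y, hxy, hf⟩ := Finite.exists_ne_map_eq_of_infinite
    (fun k : ℕ => ((Nat.fib k : ZMod n), (Nat.fib (k+1) : ZMod n)))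
  have key : ∀ a b : ℕ, a < b →
      ((Nat.fib a : ZMod n), (Nat.fib (a+1) : ZMod n)) =
        ((Nat.fib b : ZMod n), (Nat.fib (b+1) : ZMod n)) → ∃ k, 0 < k ∧ n ∣ Nat.fib k := by
    intro a b hab h
    refine ⟨b - a, by omega, ?_⟩
    have := pair_shift n a b hab.le (congrArg Prod.fst h) (congrArg Prod.snd h)
    exact (ZMod.natCast_eq_zero_iff _ _).mp this
  rcases lt_or_gt_of_ne hxy with h | h
  · exact key x y h hf
  · exact key y x h hf.symm

lemma zf_spec (n : ℕ) (hn : 0 < n) : 0 < zf n ∧ n ∣ Nat.fib (zf n) := by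
  obtain ⟨k, hk⟩ := exists_fib_dvd n hn
  exact Nat.sInf_mem (⟨k, hk⟩ : {k | 0 < k ∧ n ∣ Nat.fib k}.Nonempty)

lemma zf_dvd (n m : ℕ) (hn : 0 < n) (hm : 0 < m) (h : n ∣ Nat.fib m) : zf n ∣ m := by
  obtain ⟨hz, hzd⟩ := zf_spec n hn
  set d := Nat.gcd (zf n) m with hd
  have hdpos : 0 < d := Nat.gcd_pos_of_pos_left _ hz
  have hnd : n ∣ Nat.fib d := by
    rw [hd, Nat.fib_gcd]
    exact Nat.dvd_gcd hzd h
  have h1 : zf n ≤ d := Nat.sInf_le ⟨hdpos, hnd⟩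
  have h2 : d ∣ zf n := Nat.gcd_dvd_left _ _
  have : d = zf n := le_antisymm (Nat.le_of_dvd hz h2) h1
  rw [← this]; exact Nat.gcd_dvd_right _ _

theorem stmt5 (n : ℕ) (hn : 0 < n) : n ∈ Afib ↔ n = gf (ellf n) := by
  obtain ⟨hz, hzd⟩ := zf_spec n hn
  have hlpos : 0 < ellf n := Nat.pos_of_ne_zero (by
    simp [ellf, Nat.lcm_ne_zero hn.ne' hz.ne'])
  have hnl : n ∣ ellf n := Nat.dvd_lcm_left _ _
  have hnfl : n ∣ Nat.fib (ellf n) :=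
    hzd.trans (Nat.fib_dvd _ _ (Nat.dvd_lcm_right _ _))
  constructor
  · rintro ⟨m, hm, hg⟩
    have hnm : n ∣ m := hg ▸ Nat.gcd_dvd_left _ _
    have hnfm : n ∣ Nat.fib m := hg ▸ Nat.gcd_dvd_right _ _
    have hzm : zf n ∣ m := zf_dvd n m hn hm hnfm
    have hlm : ellf n ∣ m := Nat.lcm_dvd hnm hzm
    have h1 : n ∣ gf (ellf n) := Nat.dvd_gcd hnl hnfl
    have h2 : gf (ellf n) ∣ n := by
      have := Nat.dvd_gcd ((Nat.gcd_dvd_left (ellf n) (Nat.fib (ellf n))).trans hlm)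
        ((Nat.gcd_dvd_right (ellf n) (Nat.fib (ellf n))).trans (Nat.fib_dvd _ _ hlm))
      conv_rhs => rw [← hg]
      exact this
    exact (Nat.dvd_antisymm h1 h2)
  · intro h
    exact ⟨ellf n, hlpos, h.symm⟩
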